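/- arXiv:1307.7370 — 5 statements merged into one kernel-verified Lean document; each statement's English description precedes it below -/
import Mathlib

section
/- The exponential generating function of the sequence E_{n,a} satisfies ∑_{n≥0} E_{n,a} t^n/n! = 1/((a/2)(e^t + e^{-t}) + 1 - a). -/
open Finset

noncomputable def E (a : ℝ) : ℕ → ℝ
  | 0 => 1
  | n + 1 =>
      -a * ∑ k ∈ (Finset.Icc 1 ((n + 1) / 2)).attach,
        ((n + 1).choose (2 * k.1) : ℝ) * E a (n + 1 - 2 * k.1)
  decreasing_by
    have h := Finset.mem_Icc.mp k.2
    omega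

noncomputable def EP (a : ℝ) (n : ℕ) (x : ℝ) : ℝ :=
  ∑ k ∈ Finset.range (n + 1), (n.choose k : ℝ) * E a k * x ^ (n - k)

/-!
Multiplying exponential generating functions convolves their coefficient sequences binomially.
The second factor has exponential coefficients `1, 0, a, 0, a, 0, …`, so the `n`-th coefficient of
the product is `(E_n + a ∑_{k ≥ 1} C(n, 2k) E_{n-2k}) / n!`, which the recurrence makes vanish for
`n ≥ 1`.
-/

theorem Finset.sum_range_succ_ite_even {M : Type*} [AddCommMonoid M] (f : ℕ → M) (n : ℕ) :
    ∑ k ∈ range (n + 1), (if Even k then f k else 0) = ∑ j ∈ range (n / 2 + 1), f (2 * j) := by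
  rw [← sum_filter]
  refine sum_nbij' (· / 2) (2 * ·) ?_ ?_ ?_ ?_ ?_ <;>
    simp only [mem_filter, mem_range, Nat.even_iff] <;> intros <;> first | omega | congr; omega

namespace PowerSeries

variable {K : Type*} [Field K] [CharZero K]

theorem coeff_mk_div_factorial_mul (f g : ℕ → K) (n : ℕ) :
    coeff n (mk (fun k => f k / k.factorial) * mk (fun k => g k / k.factorial)) =
      (∑ k ∈ range (n + 1), (n.choose k : K) * f k * g (n - k)) / n.factorial := by
  rw [coeff_mul, Nat.sum_antidiagonal_eq_sum_range_succ (fun i j => coeff i _ * coeff j _),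
    sum_div]
  refine sum_congr rfl fun k hk => ?_
  rw [coeff_mk, coeff_mk, Nat.cast_choose K (Nat.lt_succ_iff.mp (mem_range.mp hk))]
  have : (n.factorial : K) ≠ 0 := Nat.cast_ne_zero.mpr n.factorial_ne_zero
  field_simp

theorem exp_add_rescale_neg_one_exp :
    exp K + rescale (-1) (exp K) = mk fun n => (if Even n then (2 : K) else 0) / n.factorial := by
  ext n
  rcases Nat.even_or_odd n with hn | hn
  · simp [coeff_exp, hn.neg_one_pow, hn]
    ring
  · simp [coeff_exp, hn.neg_one_pow, Nat.not_even_iff_odd.mpr hn]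

end PowerSeries

open PowerSeries

theorem E_eq_neg_mul_sum (a : ℝ) {n : ℕ} (hn : n ≠ 0) :
    E a n = -a * ∑ j ∈ Icc 1 (n / 2), (n.choose (2 * j) : ℝ) * E a (n - 2 * j) := by
  obtain ⟨m, rfl⟩ := Nat.exists_eq_succ_of_ne_zero hn
  rw [E, sum_attach _ fun j => ((m + 1).choose (2 * j) : ℝ) * E a (m + 1 - 2 * j)]

theorem mul_sum_choose_even_mul_E (a : ℝ) {n : ℕ} (hn : n ≠ 0) :
    a * ∑ j ∈ range (n / 2 + 1), (n.choose (2 * j) : ℝ) * E a (n - 2 * j) = (a - 1) * E a n := by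
  rw [range_eq_Ico, sum_eq_sum_Ico_succ_bot (by omega : 0 < n / 2 + 1), zero_add,
    Ico_add_one_right_eq_Icc]
  simp only [mul_zero, Nat.choose_zero_right, Nat.sub_zero, Nat.cast_one, one_mul]
  linear_combination E_eq_neg_mul_sum a hn

theorem stmt0 (a : ℝ) :
    (PowerSeries.mk fun n => E a n / n.factorial) *
      (PowerSeries.C (a / 2) *
          (PowerSeries.exp ℝ + PowerSeries.rescale (-1) (PowerSeries.exp ℝ)) +
        PowerSeries.C (1 - a)) = 1 := by
  have hg : C (a / 2) * (exp ℝ + rescale (-1) (exp ℝ)) + C (1 - a) =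
      mk fun n => ((if Even n then a else 0) + if n = 0 then 1 - a else 0) / n.factorial := by
    ext n
    rw [exp_add_rescale_neg_one_exp]
    by_cases hn : n = 0 <;> by_cases he : Even n <;> simp [hn, he, coeff_C]; ring
  ext n
  rw [hg, mul_comm, coeff_mk_div_factorial_mul, coeff_one]
  rcases eq_or_ne n 0 with rfl | hn
  · simp [E]
  rw [if_neg hn, div_eq_zero_iff, or_iff_left (Nat.cast_ne_zero.mpr n.factorial_ne_zero)]
  simp only [mul_add, add_mul, sum_add_distrib, mul_ite, ite_mul, mul_zero, zero_mul]
  rw [sum_range_succ_ite_even, sum_ite_eq', if_pos (mem_range.mpr n.succ_pos)]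
  simp only [mul_right_comm _ a, ← sum_mul, Nat.choose_zero_right, Nat.cast_one, one_mul,
    Nat.sub_zero]
  linear_combination mul_sum_choose_even_mul_E a hn
end

section
/- For any real number a, the generalized Euler polynomials satisfy E_{n,a}(1-x) = ∑_{k=0}^{n} C(n,k) (-1)^k E_{k,a}(x). -/
open Finset

/-!
`EP a` is the Appell sequence attached to `E a`, so it satisfies the addition formula
`EP a n (x + y) = ∑ C(n,k) EP a k x y^(n-k)`; since `E a` vanishes at odd indices,
`EP a n (-x) = (-1)^n EP a n x`. Writing `1 - x = -x + 1` and combining the two gives the identity.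
-/

section Appell

variable {R : Type*}

def appellEval [CommSemiring R] (b : ℕ → R) (n : ℕ) (x : R) : R :=
  ∑ k ∈ range (n + 1), (n.choose k : R) * b k * x ^ (n - k)

theorem appellEval_add [CommSemiring R] (b : ℕ → R) (n : ℕ) (x y : R) :
    appellEval b n (x + y) =
      ∑ k ∈ range (n + 1), (n.choose k : R) * appellEval b k x * y ^ (n - k) := by
  have binomial_block : ∀ j ∈ range (n + 1), ∑ k ∈ Ico j (n + 1),
      (n.choose k : R) * k.choose j * x ^ (k - j) * y ^ (n - k) = n.choose j * (x + y) ^ (n - j) := by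
    intro j hj
    have hjn : j ≤ n := Nat.lt_succ_iff.mp (mem_range.mp hj)
    rw [sum_Ico_eq_sum_range, show n + 1 - j = n - j + 1 by omega, add_pow, mul_sum]
    refine sum_congr rfl fun i _ => ?_
    rw [show (n.choose (j + i) : R) * (j + i).choose j = n.choose j * (n - j).choose i by
      rw [← Nat.cast_mul, ← Nat.cast_mul, Nat.choose_mul (Nat.le_add_right j i),
        Nat.add_sub_cancel_left], Nat.add_sub_cancel_left, show n - (j + i) = n - j - i by omega]
    ring
  calc appellEval b n (x + y)
      = ∑ j ∈ range (n + 1), ∑ k ∈ Ico j (n + 1),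
          b j * ((n.choose k : R) * k.choose j * x ^ (k - j) * y ^ (n - k)) := by
        refine sum_congr rfl fun j hj => ?_
        rw [← mul_sum, binomial_block j hj]
        ring
    _ = ∑ k ∈ range (n + 1), ∑ j ∈ range (k + 1),
          b j * ((n.choose k : R) * k.choose j * x ^ (k - j) * y ^ (n - k)) := by
        refine sum_comm' fun j k => ?_
        simp only [mem_range, mem_Ico]
        omega
    _ = _ := by
        refine sum_congr rfl fun k _ => ?_
        rw [appellEval, mul_sum, sum_mul]
        refine sum_congr rfl fun j _ => ?_
        ring

theorem appellEval_neg [CommRing R] {b : ℕ → R} (hb : ∀ n, Odd n → b n = 0) (n : ℕ) (x : R) :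
    appellEval b n (-x) = (-1) ^ n * appellEval b n x := by
  rw [appellEval, appellEval, mul_sum]
  refine sum_congr rfl fun k hk => ?_
  have hkn : k ≤ n := Nat.lt_succ_iff.mp (mem_range.mp hk)
  rcases Nat.even_or_odd k with hk_even | hk_odd
  · rw [neg_pow, show n = k + (n - k) by omega, pow_add, hk_even.neg_one_pow, Nat.add_sub_cancel_left]
    ring
  · simp [hb k hk_odd]

end Appell

theorem E_eq_zero_of_odd (a : ℝ) (n : ℕ) (hn : Odd n) : E a n = 0 := by
  induction n using Nat.strong_induction_on with
  | _ n ih =>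
    obtain ⟨m, rfl⟩ : ∃ m, n = m + 1 := Nat.exists_eq_succ_of_ne_zero (by rintro rfl; simp at hn)
    rw [E]
    refine mul_eq_zero_of_right _ (sum_eq_zero fun k _ => ?_)
    have hk := mem_Icc.mp k.2
    rw [ih _ (by omega) (by obtain ⟨t, ht⟩ := hn; exact ⟨t - k.1, by omega⟩), mul_zero]

theorem stmt2 (a x : ℝ) (n : ℕ) :
    EP a n (1 - x) = ∑ k ∈ Finset.range (n + 1), (n.choose k : ℝ) * (-1) ^ k * EP a k x := by
  change appellEval (E a) n (1 - x) =
    ∑ k ∈ range (n + 1), (n.choose k : ℝ) * (-1) ^ k * appellEval (E a) k x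
  rw [sub_eq_neg_add, appellEval_add]
  refine sum_congr rfl fun k _ => ?_
  rw [appellEval_neg (E_eq_zero_of_odd a), one_pow, mul_one, mul_assoc]
end

section
/- For any real number a and positive integer n, (a/2)(E_{n,a}(x+1) + E_{n,a}(x-1)) + (1-a) E_{n,a}(x) = x^n. -/
/-
The recurrence defining `E a` says exactly that the identity holds at `x = 0`. The polynomials
`EP a n` form an Appell sequence: their exponential generating function is `E(t) e^{xt}`, so
`EP a n (y + x) = ∑ C(n,k) EP a k y x^(n-k)`. Expanding the three shifts `1 + x`, `-1 + x`,
`0 + x` this way reduces the identity at `x` to the identity at `0` and the binomial theorem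
for `(0 + x)^n`.
-/

open Finset

open PowerSeries Nat

theorem sum_range_one_add_neg_one_pow_mul {R : Type*} [CommRing R] (g : ℕ → R) (n : ℕ) :
    ∑ i ∈ range (n + 1), (1 + (-1) ^ i) * g i = 2 * ∑ j ∈ range (n / 2 + 1), g (2 * j) := by
  induction n with
  | zero => norm_num
  | succ n ih =>
    rw [sum_range_succ, ih]
    obtain ⟨m, rfl | rfl⟩ := Nat.even_or_odd' n
    · rw [show (2 * m + 1) / 2 = 2 * m / 2 by omega]
      simp [pow_succ]
    · rw [show (2 * m + 1 + 1) / 2 = (2 * m + 1) / 2 + 1 by omega, sum_range_succ (n := _ + 1),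
        show (2 * m + 1) / 2 + 1 = m + 1 by omega, show 2 * (m + 1) = 2 * m + 1 + 1 by ring]
      simp only [pow_succ, pow_mul, pow_zero, mul_neg, mul_one, neg_neg, one_pow]
      ring

theorem sum_Icc_one_eq_sum_range {M : Type*} [AddCommMonoid M] (f : ℕ → M) (k : ℕ) :
    ∑ j ∈ Icc 1 k, f j = ∑ j ∈ range k, f (j + 1) := by
  rw [range_eq_Ico, sum_Ico_add' f, ← Ico_add_one_right_eq_Icc, zero_add]

section
variable {K : Type*} [Field K]

noncomputable def egf (f : ℕ → K) : K⟦X⟧ := mk fun n => f n / n !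

@[simp]
theorem coeff_egf (f : ℕ → K) (n : ℕ) : coeff n (egf f) = f n / n ! := coeff_mk _ _

variable [CharZero K]

theorem egf_mul_rescale_exp (f : ℕ → K) (x : K) :
    egf f * rescale x (exp K) =
      egf fun n => ∑ k ∈ range (n + 1), n.choose k * f k * x ^ (n - k) := by
  ext n
  rw [coeff_mul, sum_antidiagonal_eq_sum_range_succ
    (fun i j => coeff i (egf f) * coeff j (rescale x (exp K))), coeff_egf, sum_div]
  refine sum_congr rfl fun k hk => ?_
  rw [cast_choose K (mem_range_succ_iff.mp hk)]
  have : (n ! : K) ≠ 0 := cast_ne_zero.mpr n.factorial_ne_zero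
  simp only [coeff_egf, coeff_rescale, coeff_exp, one_div, map_inv₀, map_natCast]
  field_simp

theorem sum_choose_mul_sum_choose (f : ℕ → K) (x y : K) (n : ℕ) :
    ∑ k ∈ range (n + 1),
        n.choose k * (∑ j ∈ range (k + 1), k.choose j * f j * y ^ (k - j)) * x ^ (n - k) =
      ∑ k ∈ range (n + 1), n.choose k * f k * (y + x) ^ (n - k) := by
  have h : egf f * rescale y (exp K) * rescale x (exp K) = egf f * rescale (y + x) (exp K) := by
    rw [mul_assoc, exp_mul_exp_eq_exp_add]
  rw [egf_mul_rescale_exp, egf_mul_rescale_exp, egf_mul_rescale_exp] at h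
  have hn := congrArg (coeff n) h
  rwa [coeff_egf, coeff_egf, div_left_inj' (cast_ne_zero.mpr n.factorial_ne_zero)] at hn

end

theorem E_succ (a : ℝ) (n : ℕ) :
    E a (n + 1) =
      -a * ∑ j ∈ Icc 1 ((n + 1) / 2), ((n + 1).choose (2 * j) : ℝ) * E a (n + 1 - 2 * j) := by
  rw [E, sum_attach (Icc 1 ((n + 1) / 2))
    fun j => ((n + 1).choose (2 * j) : ℝ) * E a (n + 1 - 2 * j)]

theorem EP_zero_right (a : ℝ) (n : ℕ) : EP a n 0 = E a n := by
  rw [EP, sum_eq_single_of_mem n (self_mem_range_succ n)]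
  · simp
  · intro k hk hkn
    simp [Nat.sub_ne_zero_of_lt (lt_of_le_of_ne (mem_range_succ_iff.mp hk) hkn)]

theorem EP_one_add_EP_neg_one (a : ℝ) (n : ℕ) :
    EP a n 1 + EP a n (-1) =
      2 * ∑ j ∈ range (n / 2 + 1), (n.choose (2 * j) : ℝ) * E a (n - 2 * j) := by
  rw [← sum_range_one_add_neg_one_pow_mul fun i => (n.choose i : ℝ) * E a (n - i), EP, EP,
    ← sum_add_distrib, ← sum_range_reflect]
  refine sum_congr rfl fun i hi => ?_
  have hi : i ≤ n := mem_range_succ_iff.mp hi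
  rw [add_tsub_cancel_right, choose_symm hi, Nat.sub_sub_self hi]
  ring

theorem EP_identity_at_zero (a : ℝ) (n : ℕ) :
    a / 2 * (EP a n 1 + EP a n (-1)) + (1 - a) * EP a n 0 = 0 ^ n := by
  rw [EP_one_add_EP_neg_one, EP_zero_right, sum_range_succ']
  cases n with
  | zero => simp [E]
  | succ n =>
    simp only [mul_zero, Nat.sub_zero, choose_zero_right, cast_one, one_mul]
    rw [E_succ, sum_Icc_one_eq_sum_range]
    ring

theorem EP_add (a y x : ℝ) (n : ℕ) :
    EP a n (y + x) = ∑ k ∈ range (n + 1), n.choose k * EP a k y * x ^ (n - k) :=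
  (sum_choose_mul_sum_choose (E a) x y n).symm

theorem stmt3_general (a x : ℝ) (n : ℕ) :
    a / 2 * (EP a n (x + 1) + EP a n (x - 1)) + (1 - a) * EP a n x = x ^ n := by
  calc a / 2 * (EP a n (x + 1) + EP a n (x - 1)) + (1 - a) * EP a n x
      = a / 2 * (EP a n (1 + x) + EP a n (-1 + x)) + (1 - a) * EP a n (0 + x) := by
        rw [add_comm x, neg_add_eq_sub, zero_add]
    _ = ∑ k ∈ range (n + 1), n.choose k *
          (a / 2 * (EP a k 1 + EP a k (-1)) + (1 - a) * EP a k 0) * x ^ (n - k) := by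
        simp only [EP_add, mul_sum, ← sum_add_distrib]
        exact sum_congr rfl fun k _ => by ring
    _ = (0 + x) ^ n := by
        rw [add_pow]
        exact sum_congr rfl fun k _ => by rw [EP_identity_at_zero]; ring
    _ = x ^ n := by rw [zero_add]

theorem stmt3 (a x : ℝ) (n : ℕ) (hn : 1 ≤ n) :
    a / 2 * (EP a n (x + 1) + EP a n (x - 1)) + (1 - a) * EP a n x = x ^ n :=
  stmt3_general a x n
end

section
/- For any nonzero real number a and any positive integer n, ∑_{k=1}^{n} C(2n,2k) 5^{2k} E_{2n-2k,a} = 2·4^{2n}/a + (3a^2-8a+4)·2^{2n+1}/a^3 + 4(a-1)·3^{2n}/a^2 + 8(a-1)(a^2-4a+2)/a^4 - ((5a^2-10a+4)^2/a^5) E_{2n,a}. -/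
/-! The polynomials `EP a n x = ∑ C(n,k) E_k x^(n-k)` form an Appell sequence, so `EP a n (x + y)`
expands in the values `EP a m y`. The recurrence defining `E` says precisely that
`EP a m 1 + EP a m (-1) = 2 (1 - 1/a) E_m` for `m ≥ 1`, and the expansion then becomes the
difference equation `P(x+1) + P(x-1) = 2 (1 - 1/a) P(x) + (2/a) x^n` for `P = EP a n`.
For `n` even, `P` is even (odd-indexed `E_k` vanish), so `P(0) = E_n` and `P(1) = (1 - 1/a) E_n`;
running the difference equation up to `x = 5` gives `P(5)`, and the sum in the theorem is
`P(5) - E_n`. -/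

open Finset

section SumLemmas

variable {M : Type*} [AddCommMonoid M]

theorem Finset.sum_range_succ_eq_add_sum_Icc (f : ℕ → M) (n : ℕ) :
    ∑ i ∈ range (n + 1), f i = f 0 + ∑ i ∈ Icc 1 n, f i := by
  rw [Nat.range_succ_eq_Icc_zero, ← insert_Icc_add_one_left_eq_Icc n.zero_le,
    sum_insert (by simp), zero_add]

theorem Finset.sum_range_succ_eq_sum_even (g : ℕ → M) (m : ℕ)
    (hg : ∀ j, 2 * j + 1 ≤ m → g (2 * j + 1) = 0) :
    ∑ i ∈ range (m + 1), g i = ∑ j ∈ range (m / 2 + 1), g (2 * j) := by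
  rw [← sum_image (f := g) (g := (2 * ·)) fun i _ j _ h => by simp only at h; omega]
  refine (sum_subset (fun i => by simp only [mem_image, mem_range]; omega) ?_).symm
  intro i hi hi_even
  obtain ⟨j, rfl⟩ : ∃ j, i = 2 * j + 1 := by
    simp only [mem_image, mem_range, not_exists, not_and] at hi hi_even
    exact ⟨i / 2, by have := hi_even (i / 2); omega⟩
  exact hg j (by simpa using hi)

end SumLemmas

theorem sum_choose_mul_add_pow {R : Type*} [CommSemiring R] (c : ℕ → R) (n : ℕ) (x y : R) :
    ∑ k ∈ range (n + 1), (n.choose k : R) * c k * (x + y) ^ (n - k) =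
      ∑ m ∈ range (n + 1),
        (n.choose m : R) * (∑ k ∈ range (m + 1), (m.choose k : R) * c k * y ^ (m - k)) *
          x ^ (n - m) := by
  calc _ = ∑ k ∈ range (n + 1), ∑ m ∈ Ico k (n + 1),
        (n.choose k : R) * ((n - k).choose (m - k) : R) * c k * y ^ (m - k) * x ^ (n - m) := by
        refine sum_congr rfl fun k hk => ?_
        rw [add_comm x y, add_pow, mul_sum, sum_Ico_eq_sum_range,
          show n + 1 - k = n - k + 1 by have := mem_range.1 hk; omega]
        refine sum_congr rfl fun i hi => ?_
        rw [show k + i - k = i by omega, show n - (k + i) = n - k - i by omega]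
        ring
    _ = ∑ m ∈ range (n + 1), ∑ k ∈ range (m + 1),
        (n.choose k : R) * ((n - k).choose (m - k) : R) * c k * y ^ (m - k) * x ^ (n - m) :=
        sum_comm' fun k m => by simp only [mem_range, mem_Ico]; omega
    _ = _ := by
        refine sum_congr rfl fun m _ => ?_
        rw [mul_sum, sum_mul]
        refine sum_congr rfl fun k hk => ?_
        have hcast : (n.choose k : R) * ((n - k).choose (m - k) : R) =
            (n.choose m : R) * (m.choose k : R) := by
          rw [← Nat.cast_mul, ← Nat.cast_mul,
            Nat.choose_mul (Nat.lt_succ_iff.1 (mem_range.1 hk))]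
        rw [hcast]
        ring

theorem E_zero (a : ℝ) : E a 0 = 1 := by
  rw [E]

theorem E_of_one_le (a : ℝ) {m : ℕ} (hm : 1 ≤ m) :
    E a m = -a * ∑ k ∈ Icc 1 (m / 2), (m.choose (2 * k) : ℝ) * E a (m - 2 * k) := by
  obtain ⟨n, rfl⟩ : ∃ n, m = n + 1 := ⟨m - 1, by omega⟩
  rw [E, sum_attach (Icc 1 ((n + 1) / 2))
    fun k => ((n + 1).choose (2 * k) : ℝ) * E a (n + 1 - 2 * k)]

theorem E_two_mul_add_one (a : ℝ) (j : ℕ) : E a (2 * j + 1) = 0 := by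
  induction j using Nat.strong_induction_on with
  | _ j ih =>
    rw [E_of_one_le a (by omega), show (2 * j + 1) / 2 = j by omega, sum_eq_zero, mul_zero]
    intro k hk
    have hk' := mem_Icc.1 hk
    rw [show 2 * j + 1 - 2 * k = 2 * (j - k) + 1 by omega, ih (j - k) (by omega), mul_zero]

theorem sum_range_choose_two_mul_mul_E {a : ℝ} (ha : a ≠ 0) {m : ℕ} (hm : 1 ≤ m) :
    ∑ j ∈ range (m / 2 + 1), (m.choose (2 * j) : ℝ) * E a (m - 2 * j) =
      (1 - 1 / a) * E a m := by
  rw [sum_range_succ_eq_add_sum_Icc]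
  simp only [Nat.mul_zero, Nat.sub_zero, Nat.choose_zero_right, Nat.cast_one, one_mul]
  rw [E_of_one_le a hm]
  field_simp
  ring

theorem EP_eq_sum_range (a : ℝ) (m : ℕ) (x : ℝ) :
    EP a m x = ∑ i ∈ range (m + 1), (m.choose i : ℝ) * x ^ i * E a (m - i) := by
  rw [EP, ← sum_range_reflect]
  refine sum_congr rfl fun i hi => ?_
  have hi' := mem_range.1 hi
  rw [show m + 1 - 1 - i = m - i by omega, show m - (m - i) = i by omega,
    Nat.choose_symm (by omega)]
  ring

theorem EP_at_zero (a : ℝ) (m : ℕ) : EP a m 0 = E a m := by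
  rw [EP_eq_sum_range, sum_range_succ']
  simp

theorem EP_two_mul (a : ℝ) (n : ℕ) (x : ℝ) :
    EP a (2 * n) x =
      ∑ j ∈ range (n + 1),
        ((2 * n).choose (2 * j) : ℝ) * x ^ (2 * j) * E a (2 * n - 2 * j) := by
  rw [EP_eq_sum_range, sum_range_succ_eq_sum_even, Nat.mul_div_cancel_left n two_pos]
  intro j hj
  rw [show 2 * n - (2 * j + 1) = 2 * (n - j - 1) + 1 by omega, E_two_mul_add_one, mul_zero]

theorem EP_two_mul_neg (a : ℝ) (n : ℕ) (x : ℝ) : EP a (2 * n) (-x) = EP a (2 * n) x := by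
  simp only [EP_two_mul, pow_mul, neg_sq]

theorem EP_at_one_add_EP_at_neg_one {a : ℝ} (ha : a ≠ 0) {m : ℕ} (hm : 1 ≤ m) :
    EP a m 1 + EP a m (-1) = 2 * (1 - 1 / a) * E a m := by
  rw [EP_eq_sum_range, EP_eq_sum_range, ← sum_add_distrib, sum_range_succ_eq_sum_even,
    mul_assoc, ← sum_range_choose_two_mul_mul_E ha hm, mul_sum]
  · refine sum_congr rfl fun j _ => ?_
    simp only [one_pow, pow_mul, neg_one_sq]
    ring
  · intro j _
    simp only [one_pow, pow_succ, pow_mul]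
    ring

theorem EP_shift (a : ℝ) (n : ℕ) (x y : ℝ) :
    EP a n (x + y) = ∑ m ∈ range (n + 1), (n.choose m : ℝ) * EP a m y * x ^ (n - m) :=
  sum_choose_mul_add_pow (E a) n x y

theorem EP_add_one_add_EP_sub_one {a : ℝ} (ha : a ≠ 0) (n : ℕ) (x : ℝ) :
    EP a n (x + 1) + EP a n (x - 1) = 2 * (1 - 1 / a) * EP a n x + 2 / a * x ^ n := by
  have hsplit (f : ℕ → ℝ) : ∑ m ∈ range (n + 1), (n.choose m : ℝ) * f m * x ^ (n - m) =
      f 0 * x ^ n + ∑ m ∈ Icc 1 n, (n.choose m : ℝ) * f m * x ^ (n - m) := by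
    simp [sum_range_succ_eq_add_sum_Icc]
  rw [sub_eq_add_neg, EP_shift, EP_shift, ← sum_add_distrib]
  simp_rw [← add_mul, ← mul_add]
  rw [hsplit, EP.eq_1 a n x, hsplit, E_zero,
    sum_congr rfl fun m hm => by rw [EP_at_one_add_EP_at_neg_one ha (mem_Icc.1 hm).1]]
  simp only [EP, zero_add, range_one, sum_singleton, Nat.choose_self, Nat.cast_one, E_zero,
    Nat.sub_self, pow_zero, mul_one]
  have hfactor : ∑ m ∈ Icc 1 n, (n.choose m : ℝ) * (2 * (1 - 1 / a) * E a m) * x ^ (n - m) =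
      2 * (1 - 1 / a) * ∑ m ∈ Icc 1 n, (n.choose m : ℝ) * E a m * x ^ (n - m) := by
    rw [mul_sum]
    exact sum_congr rfl fun _ _ => by ring
  rw [hfactor]
  field_simp
  ring

theorem stmt11 (a : ℝ) (ha : a ≠ 0) (n : ℕ) (hn : 1 ≤ n) :
    ∑ k ∈ Finset.Icc 1 n, ((2 * n).choose (2 * k) : ℝ) * 5 ^ (2 * k) * E a (2 * n - 2 * k) =
      2 * 4 ^ (2 * n) / a + (3 * a ^ 2 - 8 * a + 4) * 2 ^ (2 * n + 1) / a ^ 3 +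
        4 * (a - 1) * 3 ^ (2 * n) / a ^ 2 + 8 * (a - 1) * (a ^ 2 - 4 * a + 2) / a ^ 4 -
        (5 * a ^ 2 - 10 * a + 4) ^ 2 / a ^ 5 * E a (2 * n) := by
  set P := EP a (2 * n)
  have hsum : ∑ k ∈ Icc 1 n, ((2 * n).choose (2 * k) : ℝ) * 5 ^ (2 * k) *
      E a (2 * n - 2 * k) = P 5 - E a (2 * n) := by
    simp [P, EP_two_mul, sum_range_succ_eq_add_sum_Icc]
  have h0 : P 0 = E a (2 * n) := EP_at_zero a (2 * n)
  have h1 : P 1 = (1 - 1 / a) * E a (2 * n) := by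
    linear_combination (EP_at_one_add_EP_at_neg_one ha (by omega : 1 ≤ 2 * n) -
      EP_two_mul_neg a n 1) / 2
  have step (x : ℝ) : P (x + 1) = 2 * (1 - 1 / a) * P x - P (x - 1) + 2 / a * x ^ (2 * n) := by
    linear_combination EP_add_one_add_EP_sub_one ha (2 * n) x
  have h2 := step 1
  have h3 := step 2
  have h4 := step 3
  have h5 := step 4
  norm_num at h2 h3 h4 h5
  rw [hsum, h5, h4, h3, h2, h1, h0]
  field_simp
  ring
end

section
/- For any real number a and sequences (a_n), (b_n), one has b_n = a ∑_{k=0}^{⌊n/2⌋} C(n,2k) a_{n-2k} + (1-a) a_n for all n ≥ 0 if and only if a_n = ∑_{k=0}^{⌊n/2⌋} C(n,2k) E_{2k,a} b_{n-2k} for all n ≥ 0. -/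
open Finset

/-!
Write `T c X n = ∑ₖ C(n, 2k) c k X (n - 2k)`. On exponential generating functions, `T c` multiplies
`∑ X n tⁿ / n!` by the even series `∑ c k t²ᵏ / (2k)!`, so `T c ∘ T d = T (c ⋆ d)` for the induced
convolution `⋆` of even coefficient sequences, which is commutative with unit `δ₀`. The first relation
says `B = T u A` with `u = (1, a, a, …)`, i.e. the even series `a cosh t + 1 - a`, and the recursion
defining `E` says exactly that `u ⋆ (k ↦ E a (2k)) = δ₀`. Hence `T u` and `T (k ↦ E a (2k))` are
mutually inverse.
-/

namespace EvenBinomial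

variable {R : Type*}

def transform [Semiring R] (c X : ℕ → R) (n : ℕ) : R :=
  ∑ k ∈ Icc 0 (n / 2), (n.choose (2 * k) : R) * c k * X (n - 2 * k)

def convolve [Semiring R] (c d : ℕ → R) (m : ℕ) : R :=
  ∑ p ∈ antidiagonal m, ((2 * m).choose (2 * p.1) : R) * c p.1 * d p.2

theorem convolve_comm [CommSemiring R] (c d : ℕ → R) : convolve c d = convolve d c := by
  ext m
  rw [convolve, ← Nat.sum_antidiagonal_swap, convolve]
  refine sum_congr rfl fun p hp => ?_
  rw [HasAntidiagonal.mem_antidiagonal] at hp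
  rw [Prod.fst_swap, Prod.snd_swap,
    Nat.choose_symm_of_eq_add (by omega : 2 * m = 2 * p.2 + 2 * p.1)]
  ring

theorem transform_single [Semiring R] (X : ℕ → R) : transform (Pi.single 0 1) X = X := by
  ext n
  rw [transform, sum_eq_single_of_mem 0 (by simp)]
  · simp
  · intro k _ hk
    simp [Pi.single_eq_of_ne hk]

theorem transform_transform [CommSemiring R] (c d X : ℕ → R) :
    transform c (transform d X) = transform (convolve c d) X := by
  ext n
  simp only [transform, convolve, mul_sum, sum_mul]
  rw [sum_sigma', sum_sigma']
  refine sum_nbij' (fun x => ⟨x.1 + x.2, (x.1, x.2)⟩) (fun x => ⟨x.2.1, x.2.2⟩) ?_ ?_ ?_ ?_ ?_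
  · rintro ⟨k, j⟩ h
    simp only [mem_sigma, mem_Icc, HasAntidiagonal.mem_antidiagonal, and_true] at h ⊢
    omega
  · rintro ⟨m, k, j⟩ h
    simp only [mem_sigma, mem_Icc, HasAntidiagonal.mem_antidiagonal] at h ⊢
    omega
  · rintro ⟨k, j⟩ _
    rfl
  · rintro ⟨m, k, j⟩ h
    simp only [mem_sigma, HasAntidiagonal.mem_antidiagonal] at h
    simp [h.2]
  · rintro ⟨k, j⟩ h
    simp only [mem_sigma, mem_Icc] at h
    have hchoose : n.choose (2 * k) * (n - 2 * k).choose (2 * j) =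
        n.choose (2 * (k + j)) * (2 * (k + j)).choose (2 * k) := by
      rw [Nat.choose_mul (by omega), show 2 * (k + j) - 2 * k = 2 * j by omega]
    rw [show n - 2 * k - 2 * j = n - 2 * (k + j) by omega]
    calc (n.choose (2 * k) : R) * c k * ((n - 2 * k).choose (2 * j) * d j * X (n - 2 * (k + j)))
        = ((n.choose (2 * k) * (n - 2 * k).choose (2 * j) : ℕ) : R) *
            (c k * d j * X (n - 2 * (k + j))) := by
          push_cast; ring
      _ = _ := by rw [hchoose]; push_cast; ring

theorem transform_update_const [CommRing R] (a : R) (A : ℕ → R) (n : ℕ) :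
    transform (Function.update (fun _ => a) 0 1) A n =
      a * ∑ k ∈ Icc 0 (n / 2), (n.choose (2 * k) : R) * A (n - 2 * k) + (1 - a) * A n := by
  rw [transform, ← add_sum_Ioc_eq_sum_Icc (Nat.zero_le _),
    ← add_sum_Ioc_eq_sum_Icc (Nat.zero_le _), mul_add, mul_sum]
  have hIoc : ∑ k ∈ Ioc 0 (n / 2), (n.choose (2 * k) : R) * Function.update (fun _ => a) 0 1 k *
      A (n - 2 * k) = ∑ k ∈ Ioc 0 (n / 2), a * ((n.choose (2 * k) : R) * A (n - 2 * k)) :=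
    sum_congr rfl fun k hk => by rw [Function.update_of_ne (mem_Ioc.1 hk).1.ne']; ring
  rw [hIoc]
  simp only [mul_zero, Nat.choose_zero_right, Nat.cast_one, Function.update_self, Nat.sub_zero]
  ring

end EvenBinomial

open EvenBinomial

theorem E_two_mul (a : ℝ) {m : ℕ} (hm : m ≠ 0) :
    E a (2 * m) = -a * ∑ k ∈ Icc 1 m, ((2 * m).choose (2 * k) : ℝ) * E a (2 * (m - k)) := by
  obtain ⟨m, rfl⟩ := Nat.exists_eq_add_one_of_ne_zero hm
  rw [show 2 * (m + 1) = (2 * m + 1) + 1 by ring, E,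
    sum_attach _ fun k => ((2 * m + 1 + 1).choose (2 * k) : ℝ) * E a (2 * m + 1 + 1 - 2 * k)]
  refine congrArg _ (sum_congr (by congr 1; omega) fun k _ => ?_)
  rw [show 2 * (m + 1 - k) = 2 * m + 1 + 1 - 2 * k by omega]

theorem convolve_update_const_E_eq_single (a : ℝ) :
    convolve (Function.update (fun _ => a) 0 1) (fun k => E a (2 * k)) = Pi.single 0 1 := by
  ext m
  rcases eq_or_ne m 0 with rfl | hm
  · simp [convolve, E]
  rw [convolve, Nat.sum_antidiagonal_eq_sum_range_succ_mk, Nat.range_succ_eq_Icc_zero,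
    ← add_sum_Ioc_eq_sum_Icc (Nat.zero_le _), ← Icc_add_one_left_eq_Ioc, zero_add,
    Pi.single_eq_of_ne hm]
  have hIcc : ∑ k ∈ Icc 1 m, ((2 * m).choose (2 * k) : ℝ) * Function.update (fun _ => a) 0 1 k *
      E a (2 * (m - k)) = a * ∑ k ∈ Icc 1 m, ((2 * m).choose (2 * k) : ℝ) * E a (2 * (m - k)) := by
    rw [mul_sum]
    exact sum_congr rfl fun k hk => by
      rw [Function.update_of_ne (by have := (mem_Icc.1 hk).1; omega)]; ring
  rw [hIcc]
  simp only [mul_zero, Nat.choose_zero_right, Nat.cast_one, Function.update_self, Nat.sub_zero]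
  rw [E_two_mul a hm]
  ring

theorem stmt13 (a : ℝ) (A B : ℕ → ℝ) :
    (∀ n : ℕ, B n = a * (∑ k ∈ Finset.Icc 0 (n / 2), (n.choose (2 * k) : ℝ) * A (n - 2 * k)) +
        (1 - a) * A n) ↔
    (∀ n : ℕ, A n = ∑ k ∈ Finset.Icc 0 (n / 2), (n.choose (2 * k) : ℝ) * E a (2 * k) *
        B (n - 2 * k)) := by
  have hB : (∀ n : ℕ, B n = a * (∑ k ∈ Icc 0 (n / 2), (n.choose (2 * k) : ℝ) * A (n - 2 * k)) +
      (1 - a) * A n) ↔ B = transform (Function.update (fun _ => a) 0 1) A := by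
    simp only [funext_iff, transform_update_const]
  have hA : (∀ n : ℕ, A n = ∑ k ∈ Icc 0 (n / 2), (n.choose (2 * k) : ℝ) * E a (2 * k) *
      B (n - 2 * k)) ↔ A = transform (fun k => E a (2 * k)) B := funext_iff.symm
  rw [hB, hA]
  constructor
  · rintro rfl
    rw [transform_transform, convolve_comm, convolve_update_const_E_eq_single,
      transform_single]
  · rintro rfl
    rw [transform_transform, convolve_update_const_E_eq_single, transform_single]
end
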